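/- arXiv:2409.02941 — 7 statements merged into one kernel-verified Lean document; each statement's English description precedes it below -/
import Mathlib

section
/- Let M ⊆ [0,∞] be a closed nonempty subset of the extended nonnegative reals, and define G_M(x) = max{sup([0,x] ∩ M), inf([x,∞] ∩ M)} ∩ M as the larger of the two nearest points of M below/above x that belong to M. Then G_M is non-decreasing on [0,∞]. -/
open Set ENNReal

/-- Pseudo-inverse of `f : [0,1] → [0,∞]`: `f⁻(y) = sup {x ∈ [0,1] | f x < y}` (with `sup ∅ = 0`). -/
noncomputable def pinv (f : unitInterval → ℝ≥0∞) (y : ℝ≥0∞) : unitInterval :=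
  ⟨sSup {x : ℝ | ∃ hx : x ∈ unitInterval, f ⟨x, hx⟩ < y}, by
    set A : Set ℝ := {x : ℝ | ∃ hx : x ∈ unitInterval, f ⟨x, hx⟩ < y} with hA
    have hsub : A ⊆ Set.Icc (0:ℝ) 1 := fun x hx => hx.choose
    rcases A.eq_empty_or_nonempty with h | h
    · rw [h, Real.sSup_empty]; exact ⟨le_refl 0, zero_le_one⟩
    · obtain ⟨a, ha⟩ := h
      exact ⟨le_trans (hsub ha).1 (le_csSup ⟨1, fun z hz => (hsub hz).2⟩ ha),
        csSup_le ⟨a, ha⟩ fun z hz => (hsub hz).2⟩⟩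

/-- `G_M(x) = max (M ∩ {sup([0,x]∩M), inf([x,∞]∩M)})`. -/
noncomputable def GM (M : Set ℝ≥0∞) (x : ℝ≥0∞) : ℝ≥0∞ :=
  sSup (M ∩ {sSup (M ∩ Set.Iic x), sInf (M ∩ Set.Ici x)})

/-- Right limit `f(x⁺)`, with convention `f(1⁺) = ∞`. -/
noncomputable def rlim (f : unitInterval → ℝ≥0∞) (x : unitInterval) : ℝ≥0∞ :=
  if (x : ℝ) = 1 then ⊤ else sInf {z | ∃ t : unitInterval, x < t ∧ f t = z}

/-- The defining condition of the class `𝓕`. -/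
def ClassF (f : unitInterval → ℝ≥0∞) : Prop :=
  ∀ x : unitInterval,
    (rlim f x ∈ Set.range f → f x = rlim f x) ∧
    (rlim f x ∉ Set.range f → ∀ y : unitInterval, y ≠ x → f y ≠ f x)

section GM

variable {M : Set ℝ≥0∞}

theorem monotone_sInf_inter_Ici : Monotone fun x => sInf (M ∩ Ici x) := fun _ _ hxy =>
  sInf_le_sInf (inter_subset_inter_right M (Ici_subset_Ici.2 hxy))

theorem GM_le_sInf_inter_Ici (x : ℝ≥0∞) : GM M x ≤ sInf (M ∩ Ici x) := by
  refine sSup_le ?_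
  rintro z ⟨-, rfl | rfl⟩
  · exact (sSup_le fun w hw => hw.2).trans (le_sInf fun w hw => hw.2)
  · exact le_rfl

theorem le_GM_of_sSup_mem {x : ℝ≥0∞} (hs : sSup (M ∩ Iic x) ∈ M) :
    sSup (M ∩ Iic x) ≤ GM M x :=
  le_sSup ⟨hs, Or.inl rfl⟩

theorem le_GM_of_sInf_mem {x : ℝ≥0∞} (hi : sInf (M ∩ Ici x) ∈ M) :
    sInf (M ∩ Ici x) ≤ GM M x :=
  le_sSup ⟨hi, Or.inr rfl⟩

theorem sInf_inter_Ici_eq_of_le {x y : ℝ≥0∞} (hxy : x ≤ y) (hi : sInf (M ∩ Ici x) ∈ M)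
    (hyi : y ≤ sInf (M ∩ Ici x)) : sInf (M ∩ Ici y) = sInf (M ∩ Ici x) :=
  le_antisymm (sInf_le ⟨hi, hyi⟩) (monotone_sInf_inter_Ici hxy)

theorem GM_le_sSup_inter_Iic {x y : ℝ≥0∞} (hxy : x ≤ y) (hi : sInf (M ∩ Ici y) ∉ M) :
    GM M x ≤ sSup (M ∩ Iic y) := by
  refine sSup_le ?_
  rintro z ⟨hzM, rfl | rfl⟩
  · exact sSup_le_sSup (inter_subset_inter_right M (Iic_subset_Iic.2 hxy))
  · refine le_sSup ⟨hzM, mem_Iic.2 (le_of_not_gt fun hyz => hi ?_)⟩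
    rwa [sInf_inter_Ici_eq_of_le hxy hzM hyz.le]

end GM

theorem stmt3_general (M : Set ℝ≥0∞)
    (h : ∀ x : ℝ≥0∞, sSup (M ∩ Set.Iic x) ∈ M ∨ sInf (M ∩ Set.Ici x) ∈ M) :
    Monotone (GM M) := by
  intro x y hxy
  by_cases hi : sInf (M ∩ Ici y) ∈ M
  · calc GM M x ≤ sInf (M ∩ Ici x) := GM_le_sInf_inter_Ici x
      _ ≤ sInf (M ∩ Ici y) := monotone_sInf_inter_Ici hxy
      _ ≤ GM M y := le_GM_of_sInf_mem hi
  · calc GM M x ≤ sSup (M ∩ Iic y) := GM_le_sSup_inter_Iic hxy hi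
      _ ≤ GM M y := le_GM_of_sSup_mem ((h y).resolve_right hi)

theorem stmt3 (M : Set ℝ≥0∞) (hM : M.Nonempty) (hMc : IsClosed M)
    (h : ∀ x : ℝ≥0∞, sSup (M ∩ Set.Iic x) ∈ M ∨ sInf (M ∩ Set.Ici x) ∈ M) :
    Monotone (GM M) :=
  stmt3_general M h
end

section
/- Let f : [0,1] → [0,∞] be a non-decreasing function such that for all x ∈ [0,1]: if the right limit f(x⁺) belongs to Ran(f) then f(x) = f(x⁺), and if f(x⁺) ∉ Ran(f) then f is injective at x (f(x) ≠ f(y) for all y ≠ x). Let M = Ran(f), let f⁻ be the pseudo-inverse f⁻(y) = sup{x : f(x) < y}, and let G_M(x) = max(M ∩ {sup([0,x]∩M), inf([x,∞]∩M)}). Then G_M(x) = f(f⁻(x)) for all x ∈ [0,∞]. -/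
open Set ENNReal

theorem stmt4 (f : unitInterval → ℝ≥0∞) (hf : Monotone f) (hF : ClassF f) :
    ∀ x : ℝ≥0∞, GM (Set.range f) x = f (pinv f x) := by
  intro x
  set s := pinv f x with hsdef
  set A : Set ℝ := {t : ℝ | ∃ ht : t ∈ unitInterval, f ⟨t, ht⟩ < x} with hA
  have hAsub : A ⊆ Set.Icc (0:ℝ) 1 := fun t ht => ht.choose
  have hAbdd : BddAbove A := ⟨1, fun z hz => (hAsub hz).2⟩
  have hsval : (s : ℝ) = sSup A := rfl
  have hmemM : ∀ t : unitInterval, f t ∈ Set.range f := fun t => ⟨t, rfl⟩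
  have hge : ∀ t : unitInterval, (s:ℝ) < (t:ℝ) → x ≤ f t := by
    intro t ht
    by_contra h
    push_neg at h
    have hmem : (t:ℝ) ∈ A := ⟨t.2, by simpa using h⟩
    have : (t:ℝ) ≤ (s:ℝ) := hsval ▸ le_csSup hAbdd hmem
    exact absurd this (not_le.mpr ht)
  have hlt : ∀ t : unitInterval, (t:ℝ) < (s:ℝ) → f t < x := by
    intro t ht
    rcases A.eq_empty_or_nonempty with hE | hNe
    · rw [hsval, hE, Real.sSup_empty] at ht
      exact absurd ht (not_lt.mpr t.2.1)
    · rw [hsval] at ht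
      obtain ⟨t', ht'A, htt'⟩ := exists_lt_of_lt_csSup hNe ht
      obtain ⟨h1, h2⟩ := ht'A
      have hle : t ≤ ⟨t', h1⟩ := le_of_lt (by exact_mod_cast htt')
      exact lt_of_le_of_lt (hf hle) h2
  by_cases hfs : x ≤ f s
  · -- Case I : x ≤ f s
    have hb : sInf (Set.range f ∩ Set.Ici x) = f s := by
      apply le_antisymm
      · exact sInf_le ⟨hmemM s, hfs⟩
      · refine le_sInf ?_
        rintro z ⟨⟨t, rfl⟩, hz⟩
        by_contra h
        push_neg at h
        have hts : (t:ℝ) < (s:ℝ) := by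
          by_contra h'
          push_neg at h'
          exact absurd (hf (show s ≤ t from h')) (not_le.mpr h)
        exact absurd hz (not_le.mpr (hlt t hts))
      
    simp only [GM, hb]
    apply le_antisymm
    · refine sSup_le ?_
      rintro z ⟨hzM, hz⟩
      simp only [Set.mem_insert_iff, Set.mem_singleton_iff] at hz
      rcases hz with rfl | rfl
      · exact le_trans (sSup_le fun w hw => hw.2) hfs
      · exact le_rfl
    · refine le_sSup ⟨hmemM s, ?_⟩
      simp
  · -- Case II : f s < x
    push_neg at hfs
    have hb_ge : x ≤ sInf (Set.range f ∩ Set.Ici x) := le_sInf fun z hz => hz.2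
    have htgt : ∀ t : unitInterval, x ≤ f t → (s:ℝ) < (t:ℝ) := by
      intro t ht
      by_contra h
      push_neg at h
      have hle : f t ≤ f s := hf (show t ≤ s from h)
      exact absurd ht (not_le.mpr (lt_of_le_of_lt hle hfs))
    have hbM : sInf (Set.range f ∩ Set.Ici x) ∉ Set.range f := by
      by_cases hs1 : (s:ℝ) = 1
      · have hempty : Set.range f ∩ Set.Ici x = ∅ := by
          ext z
          simp only [Set.mem_inter_iff, Set.mem_empty_iff_false, iff_false, not_and]
          rintro ⟨t, rfl⟩ hz
          have h1 := htgt t hz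
          rw [hs1] at h1
          exact absurd t.2.2 (not_le.mpr h1)
        rw [hempty, sInf_empty]
        rintro ⟨t, ht⟩
        have hxt : x ≤ f t := ht ▸ le_top
        have h1 := htgt t hxt
        rw [hs1] at h1
        exact absurd t.2.2 (not_le.mpr h1)
      · have hset : {z | ∃ t : unitInterval, s < t ∧ f t = z} = Set.range f ∩ Set.Ici x := by
          ext z
          constructor
          · rintro ⟨t, hst, rfl⟩
            exact ⟨hmemM t, hge t (by exact_mod_cast hst)⟩
          · rintro ⟨⟨t, rfl⟩, hz⟩
            exact ⟨t, by exact_mod_cast htgt t hz, rfl⟩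
        have hrl : rlim f s = sInf (Set.range f ∩ Set.Ici x) := by
          rw [rlim, if_neg hs1, hset]
        intro hmem
        rw [← hrl] at hmem
        have heq := (hF s).1 hmem
        have hlt2 : f s < rlim f s := lt_of_lt_of_le hfs (hrl ▸ hb_ge)
        exact absurd heq (ne_of_lt hlt2)
    have ha : sSup (Set.range f ∩ Set.Iic x) = f s := by
      apply le_antisymm
      · refine sSup_le ?_
        rintro z ⟨⟨t, rfl⟩, hz⟩
        by_contra h
        push_neg at h
        have hst : s < t := by
          by_contra h'
          push_neg at h'
          exact absurd (hf h') (not_le.mpr h)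
        have hxt := hge t (by exact_mod_cast hst)
        have hfx : f t = x := le_antisymm hz hxt
        have hinf : sInf (Set.range f ∩ Set.Ici x) = x :=
          le_antisymm (sInf_le ⟨hfx ▸ hmemM t, Set.mem_Ici.mpr le_rfl⟩) hb_ge
        exact hbM (by rw [hinf, ← hfx]; exact hmemM t)
      · exact le_sSup ⟨hmemM s, hfs.le⟩
    simp only [GM, ha]
    apply le_antisymm
    · refine sSup_le ?_
      rintro z ⟨hzM, hz⟩
      simp only [Set.mem_insert_iff, Set.mem_singleton_iff] at hz
      rcases hz with rfl | rfl
      · exact le_rfl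
      · exact absurd hzM hbM
    · exact le_sSup ⟨hmemM s, Or.inl rfl⟩
end

section
/- There exists a non-decreasing function f : [0,1] → [0,∞] and a point a ∈ [0,∞] such that G_{Ran(f)}(a) ≠ f(f⁻(a)), where f⁻ is the pseudo-inverse of f. Concretely, for f defined by f(x) = 4x on [0,1/4], f(x) = 2 on (1/4,1/2], f(x) = 8x on (1/2,1], one has G_{Ran(f)}(2) = 2 but f(f⁻(2)) = 1. -/
open Set ENNReal

/-!
`G_M` fixes every point of `M`, so `G_{Ran f}(2) = 2` as soon as `f` attains `2`. The example `f`
attains `2` only on the plateau `(1/4, 1/2]`, which is open on the left; hence `f⁻(2) = 1/4` is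
the left end of the plateau, where `f` still takes the value `4 · 1/4 = 1`.
-/

lemma GM_eq_self_of_mem {M : Set ℝ≥0∞} {x : ℝ≥0∞} (hx : x ∈ M) : GM M x = x := by
  have hsup : sSup (M ∩ Iic x) = x :=
    IsGreatest.csSup_eq ⟨⟨hx, mem_Iic.2 le_rfl⟩, fun _ h => h.2⟩
  have hinf : sInf (M ∩ Ici x) = x :=
    IsLeast.csInf_eq ⟨⟨hx, mem_Ici.2 le_rfl⟩, fun _ h => h.2⟩
  rw [GM, hsup, hinf, pair_eq_singleton, inter_singleton_of_mem hx, sSup_singleton]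

lemma coe_pinv_eq_of_lt_iff {f : unitInterval → ℝ≥0∞} {y : ℝ≥0∞} {a : ℝ} (ha : a ∈ unitInterval)
    (h : ∀ x : unitInterval, f x < y ↔ (x : ℝ) ≤ a) : (pinv f y : ℝ) = a := by
  have hset : {x : ℝ | ∃ hx : x ∈ unitInterval, f ⟨x, hx⟩ < y} = Icc 0 a := by
    ext x
    constructor
    · rintro ⟨hx, hlt⟩
      exact ⟨hx.1, (h ⟨x, hx⟩).1 hlt⟩
    · rintro ⟨hx0, hxa⟩
      exact ⟨⟨hx0, hxa.trans ha.2⟩, (h _).2 hxa⟩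
  exact (congrArg sSup hset).trans (csSup_Icc ha.1)

noncomputable def plateauReal (x : ℝ) : ℝ :=
  if x ≤ 1 / 4 then 4 * x else if x ≤ 1 / 2 then 2 else 8 * x

noncomputable def plateau (x : unitInterval) : ℝ≥0∞ :=
  ENNReal.ofReal (plateauReal x)

lemma plateauReal_monotone : Monotone plateauReal := by
  intro x y hxy
  unfold plateauReal
  split_ifs <;> linarith

lemma plateau_monotone : Monotone plateau :=
  ENNReal.ofReal_mono.comp (plateauReal_monotone.comp fun _ _ h => h)

lemma plateauReal_lt_two_iff (x : ℝ) : plateauReal x < 2 ↔ x ≤ 1 / 4 := by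
  unfold plateauReal
  split_ifs <;> constructor <;> intros <;> linarith

lemma two_mem_range_plateau : (2 : ℝ≥0∞) ∈ range plateau :=
  ⟨⟨1 / 2, by norm_num, by norm_num⟩, by norm_num [plateau, plateauReal]⟩

lemma coe_pinv_plateau_two : (pinv plateau 2 : ℝ) = 1 / 4 := by
  refine coe_pinv_eq_of_lt_iff ⟨by norm_num, by norm_num⟩ fun x => ?_
  rw [plateau, ← ENNReal.ofReal_ofNat 2, ENNReal.ofReal_lt_ofReal_iff two_pos,
    plateauReal_lt_two_iff]

lemma plateau_pinv_two : plateau (pinv plateau 2) = 1 := by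
  rw [plateau, coe_pinv_plateau_two]
  norm_num [plateauReal]

theorem stmt5 :
    ∃ f : unitInterval → ℝ≥0∞, Monotone f ∧
      GM (Set.range f) 2 = 2 ∧ f (pinv f 2) = 1 ∧
      GM (Set.range f) 2 ≠ f (pinv f 2) := by
  have hGM : GM (range plateau) 2 = 2 := GM_eq_self_of_mem two_mem_range_plateau
  refine ⟨plateau, plateau_monotone, hGM, plateau_pinv_two, ?_⟩
  rw [hGM, plateau_pinv_two]
  norm_num
end

section
/- The binary operation T on [0,1] defined by T(x,y) = 0 if x,y ∈ [0,1/2), T(x,y) = x + y - xy if x,y ∈ [1/2,1], and T(x,y) = max{x,y} otherwise, is associative. -/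
open Set ENNReal

/-! `T(x,y) = S(f x, f y)` where `S(a,b) = a + b - ab` is the probabilistic sum and `f` sends
`[0,1/2)` to `0` and fixes `[1/2,1]`. The values of `S` on the fixed points of `f` in `[0,1]` are
again fixed by `f`: `S(0,b) = b`, and `S(a,b) ≥ a ≥ 1/2` otherwise. Hence the inner `f` in
`T(T(x,y),z) = S(f(S(f x, f y)), f z)` can be dropped, and associativity of `T` reduces to that
of `S`. -/

open Function

noncomputable def truncHalf (x : ℝ) : ℝ := if x < 1/2 then 0 else x

def probSum (a b : ℝ) : ℝ := a + b - a * b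

theorem probSum_assoc (a b c : ℝ) : probSum (probSum a b) c = probSum a (probSum b c) := by
  unfold probSum; ring

theorem truncHalf_nonneg {x : ℝ} (hx : 0 ≤ x) : 0 ≤ truncHalf x := by
  unfold truncHalf; split_ifs; exacts [le_rfl, hx]

theorem truncHalf_le_one {x : ℝ} (hx : x ≤ 1) : truncHalf x ≤ 1 := by
  unfold truncHalf; split_ifs; exacts [zero_le_one, hx]

theorem isFixedPt_truncHalf (x : ℝ) : IsFixedPt truncHalf (truncHalf x) := by
  unfold IsFixedPt truncHalf; split_ifs <;> grind

theorem Function.IsFixedPt.truncHalf_probSum {a b : ℝ} (ha : IsFixedPt truncHalf a)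
    (hb : IsFixedPt truncHalf b) (ha₁ : a ≤ 1) (hb₀ : 0 ≤ b) :
    IsFixedPt truncHalf (probSum a b) := by
  by_cases ha₀ : a = 0
  · simpa [ha₀, probSum] using hb
  · have half_le_a : 1/2 ≤ a := by
      by_contra! h
      exact ha₀ (by rw [← ha, truncHalf, if_pos h])
    have : 1/2 ≤ probSum a b := by unfold probSum; nlinarith
    unfold IsFixedPt truncHalf
    rw [if_neg this.not_gt]

theorem eq_probSum_truncHalf {T : ℝ → ℝ → ℝ}
    (hT : ∀ x y : ℝ, T x y =
      if x < 1/2 ∧ y < 1/2 then 0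
      else if 1/2 ≤ x ∧ 1/2 ≤ y then x + y - x * y
      else max x y) (x y : ℝ) :
    T x y = probSum (truncHalf x) (truncHalf y) := by
  rw [hT]
  unfold probSum truncHalf
  split_ifs <;> grind

theorem isFixedPt_truncHalf_probSum {x y : ℝ} (hx : x ≤ 1) (hy : 0 ≤ y) :
    IsFixedPt truncHalf (probSum (truncHalf x) (truncHalf y)) :=
  (isFixedPt_truncHalf x).truncHalf_probSum (isFixedPt_truncHalf y)
    (truncHalf_le_one hx) (truncHalf_nonneg hy)

theorem stmt10 (T : ℝ → ℝ → ℝ)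
    (hT : ∀ x y : ℝ, T x y =
      if x < 1/2 ∧ y < 1/2 then 0
      else if 1/2 ≤ x ∧ 1/2 ≤ y then x + y - x * y
      else max x y) :
    ∀ x ∈ Set.Icc (0:ℝ) 1, ∀ y ∈ Set.Icc (0:ℝ) 1, ∀ z ∈ Set.Icc (0:ℝ) 1,
      T (T x y) z = T x (T y z) := by
  intro x hx y hy z hz
  simp only [eq_probSum_truncHalf hT]
  rw [isFixedPt_truncHalf_probSum hx.2 hy.1, isFixedPt_truncHalf_probSum hy.2 hz.1, probSum_assoc]
end

section
/- The binary operation T on [0,1] defined by T(x,y) = xy if x,y ∈ [0,1/4); T(x,y) = 1 if x,y ∈ [1/4,1]; and T(x,y) = min{x,y} otherwise, is associative. -/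
open Set ENNReal

noncomputable def thresholdOp (c x y : ℝ) : ℝ :=
  if x < c ∧ y < c then x * y else if c ≤ x ∧ c ≤ y then 1 else min x y

namespace thresholdOp

variable {c x y z : ℝ}

theorem of_lt_of_lt (hx : x < c) (hy : y < c) : thresholdOp c x y = x * y :=
  if_pos ⟨hx, hy⟩

theorem of_lt_of_le (hx : x < c) (hy : c ≤ y) : thresholdOp c x y = x := by
  rw [thresholdOp, if_neg (by rintro ⟨-, h⟩; linarith), if_neg (by rintro ⟨h, -⟩; linarith),
    min_eq_left (hx.le.trans hy)]

theorem of_le_of_lt (hx : c ≤ x) (hy : y < c) : thresholdOp c x y = y := by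
  rw [thresholdOp, if_neg (by rintro ⟨h, -⟩; linarith), if_neg (by rintro ⟨-, h⟩; linarith),
    min_eq_right (hy.le.trans hx)]

theorem of_le_of_le (hx : c ≤ x) (hy : c ≤ y) : thresholdOp c x y = 1 := by
  rw [thresholdOp, if_neg (by rintro ⟨h, -⟩; linarith), if_pos ⟨hx, hy⟩]

/- `[c, 1]` acts as the identity on `[0, c)`, and `[0, c)` is closed under the product because
the factors are at most `1`; so each of the eight position patterns of `x, y, z` reduces to
associativity of `*` or to a trivial identity. -/
theorem assoc (hc : c ≤ 1) (hx : 0 ≤ x) (hy : y ∈ Icc 0 1) (hz : z ≤ 1) :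
    thresholdOp c (thresholdOp c x y) z = thresholdOp c x (thresholdOp c y z) := by
  rcases lt_or_ge x c with hxc | hxc <;> rcases lt_or_ge y c with hyc | hyc <;>
    rcases lt_or_ge z c with hzc | hzc
  · have hxy : x * y < c := (mul_le_of_le_one_right hx hy.2).trans_lt hxc
    have hyz : y * z < c := (mul_le_of_le_one_right hy.1 hz).trans_lt hyc
    rw [of_lt_of_lt hxc hyc, of_lt_of_lt hyc hzc, of_lt_of_lt hxy hzc, of_lt_of_lt hxc hyz,
      mul_assoc]
  · have hxy : x * y < c := (mul_le_of_le_one_right hx hy.2).trans_lt hxc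
    rw [of_lt_of_lt hxc hyc, of_lt_of_le hyc hzc, of_lt_of_le hxy hzc, of_lt_of_lt hxc hyc]
  · rw [of_lt_of_le hxc hyc, of_le_of_lt hyc hzc]
  · rw [of_lt_of_le hxc hyc, of_le_of_le hyc hzc, of_lt_of_le hxc hzc, of_lt_of_le hxc hc]
  · have hyz : y * z < c := (mul_le_of_le_one_right hy.1 hz).trans_lt hyc
    rw [of_le_of_lt hxc hyc, of_lt_of_lt hyc hzc, of_le_of_lt hxc hyz]
  · rw [of_le_of_lt hxc hyc, of_lt_of_le hyc hzc, of_le_of_lt hxc hyc]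
  · rw [of_le_of_le hxc hyc, of_le_of_lt hyc hzc, of_le_of_lt hc hzc, of_le_of_lt hxc hzc]
  · rw [of_le_of_le hxc hyc, of_le_of_le hyc hzc, of_le_of_le hc hzc, of_le_of_le hxc hc]

end thresholdOp

theorem stmt13 (T : ℝ → ℝ → ℝ)
    (hT : ∀ x y : ℝ, T x y =
      if x < 1/4 ∧ y < 1/4 then x * y
      else if 1/4 ≤ x ∧ 1/4 ≤ y then 1
      else min x y) :
    ∀ x ∈ Set.Icc (0:ℝ) 1, ∀ y ∈ Set.Icc (0:ℝ) 1, ∀ z ∈ Set.Icc (0:ℝ) 1,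
      T (T x y) z = T x (T y z) := by
  obtain rfl : T = thresholdOp (1/4) := funext₂ hT
  intro x hx y hy z hz
  exact thresholdOp.assoc (by norm_num) hx.1 hy hz.2
end

section
/- Let f : [0,1] → [0,∞] be non-decreasing and in the class 𝓕, M = Ran(f), and let C be the countable 'boundary' set from the pair (S,C) associated with M. If G_M(x) = G_M(y) for x,y ∈ [0,∞], then the half-open interval [min{x,y}, max{x,y}) is disjoint from M \ C. -/
/-!
For `x ≤ m ∈ M` both candidates in the definition of `G_M(x)` are at most `m`, so `G_M(x) ≤ m`.
If moreover `m ∉ C`, then `m` lies in no gap, and `G_M(y) > m` for every `y > m`: either `y ∈ M`,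
or `y` lies in a gap `[b, d]` above `m`; then `b` is the largest point of `M` below `y` if
`b ∈ C`, and otherwise `d ∈ C` is the smallest point of `M` above `y`.
-/

open Set ENNReal

/-- The pair `(S, C)` (with `S` given by interval endpoints `b k, d k`) is associated with `M`. -/
def AssociatedPair (M : Set ℝ≥0∞) (K : Type) (b d : K → ℝ≥0∞) (C : Set ℝ≥0∞) : Prop :=
  Countable K ∧ C.Countable ∧ C.Nonempty ∧
  (∀ k, b k < d k) ∧
  (∀ k l : K, k ≠ l →
      Set.Icc (b k) (d k) ∩ Set.Icc (b l) (d l) = ∅ ∨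
      Set.Icc (b k) (d k) ∩ Set.Icc (b l) (d l) = {d k} ∨
      Set.Icc (b k) (d k) ∩ Set.Icc (b l) (d l) = {d l}) ∧
  (∀ k, Set.Icc (b k) (d k) ∩ C = {b k} ∨ Set.Icc (b k) (d k) ∩ C = {d k} ∨
        Set.Icc (b k) (d k) ∩ C = {b k, d k}) ∧
  M = C ∪ (Set.univ \ ⋃ k, Set.Icc (b k) (d k))

section GapEndpoints

variable {α : Type*} [PartialOrder α] {a b : α} {C : Set α}

lemma Icc_inter_subset_pair
    (h : Icc a b ∩ C = {a} ∨ Icc a b ∩ C = {b} ∨ Icc a b ∩ C = {a, b}) :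
    Icc a b ∩ C ⊆ {a, b} := by
  rcases h with h | h | h <;> rw [h] <;> simp

lemma Icc_inter_eq_singleton_right_of_left_notMem
    (h : Icc a b ∩ C = {a} ∨ Icc a b ∩ C = {b} ∨ Icc a b ∩ C = {a, b}) (ha : a ∉ C) :
    Icc a b ∩ C = {b} := by
  rcases h with h | h | h
  · exact absurd (h.symm ▸ mem_singleton a : a ∈ Icc a b ∩ C).2 ha
  · exact h
  · exact absurd (h.symm ▸ mem_insert a {b} : a ∈ Icc a b ∩ C).2 ha

end GapEndpoints

section GM

variable {M : Set ℝ≥0∞} {x y a : ℝ≥0∞}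

lemma GM_le_of_mem_of_le {m : ℝ≥0∞} (hm : m ∈ M) (hxm : x ≤ m) : GM M x ≤ m := by
  refine sSup_le ?_
  rintro z ⟨-, rfl | rfl⟩
  · exact (sSup_le fun w hw => hw.2).trans hxm
  · exact sInf_le ⟨hm, hxm⟩

lemma le_GM_of_isGreatest (h : IsGreatest (M ∩ Iic y) a) : a ≤ GM M y :=
  le_sSup ⟨h.1.1, Or.inl h.csSup_eq.symm⟩

lemma le_GM_of_isLeast (h : IsLeast (M ∩ Ici y) a) : a ≤ GM M y :=
  le_sSup ⟨h.1.1, Or.inr h.csInf_eq.symm⟩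

end GM

lemma lt_GM_of_mem_diff {M C : Set ℝ≥0∞} {K : Type} {b d : K → ℝ≥0∞}
    (hIC : ∀ k, Icc (b k) (d k) ∩ C = {b k} ∨ Icc (b k) (d k) ∩ C = {d k} ∨
        Icc (b k) (d k) ∩ C = {b k, d k})
    (hM : M = C ∪ (univ \ ⋃ k, Icc (b k) (d k)))
    {m y : ℝ≥0∞} (hm : m ∈ M \ C) (hmy : m < y) : m < GM M y := by
  have hCM : C ⊆ M := hM ▸ subset_union_left
  have mem_C : ∀ k, ∀ v ∈ M, v ∈ Icc (b k) (d k) → v ∈ C := by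
    intro k v hv hvk
    rw [hM] at hv
    exact hv.resolve_right fun hv' => hv'.2 (mem_iUnion.mpr ⟨k, hvk⟩)
  by_cases hy : y ∈ M
  · exact hmy.trans_le (le_GM_of_isGreatest ⟨⟨hy, mem_Iic.mpr le_rfl⟩, fun v hv => hv.2⟩)
  obtain ⟨k, hyk⟩ : ∃ k, y ∈ Icc (b k) (d k) := by
    by_contra hyU
    exact hy (hM ▸ Or.inr ⟨mem_univ y, by simpa using hyU⟩)
  have hmb : m < b k :=
    lt_of_not_ge fun hbm => hm.2 (mem_C k m hm.1 ⟨hbm, hmy.le.trans hyk.2⟩)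
  by_cases hb : b k ∈ C
  · refine hmb.trans_le (le_GM_of_isGreatest ⟨⟨hCM hb, hyk.1⟩, ?_⟩)
    rintro v ⟨hvM, hvy⟩
    by_contra! hbv
    have hvk : v ∈ Icc (b k) (d k) := ⟨hbv.le, hvy.trans hyk.2⟩
    rcases Icc_inter_subset_pair (hIC k) ⟨hvk, mem_C k v hvM hvk⟩ with rfl | rfl
    · exact hbv.ne rfl
    · exact hy (le_antisymm hyk.2 hvy ▸ hvM)
  · have hkC := Icc_inter_eq_singleton_right_of_left_notMem (hIC k) hb
    have hdC : d k ∈ C := (hkC.symm ▸ mem_singleton (d k) : d k ∈ Icc (b k) (d k) ∩ C).2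
    refine hmy.trans_le (hyk.2.trans (le_GM_of_isLeast ⟨⟨hCM hdC, hyk.2⟩, ?_⟩))
    rintro v ⟨hvM, hyv⟩
    by_contra! hvd
    have hvk : v ∈ Icc (b k) (d k) := ⟨hyk.1.trans hyv, hvd.le⟩
    have hv : v ∈ Icc (b k) (d k) ∩ C := ⟨hvk, mem_C k v hvM hvk⟩
    rw [hkC] at hv
    exact hvd.ne hv

theorem stmt14_general (f : unitInterval → ℝ≥0∞)
    (K : Type) (b d : K → ℝ≥0∞) (C : Set ℝ≥0∞)
    (hSC : AssociatedPair (Set.range f) K b d C) :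
    ∀ x y : ℝ≥0∞, GM (Set.range f) x = GM (Set.range f) y →
      Set.Ico (min x y) (max x y) ∩ (Set.range f \ C) = ∅ := by
  obtain ⟨-, -, -, -, -, hIC, hM⟩ := hSC
  intro x y h
  have h_minmax : GM (range f) (min x y) = GM (range f) (max x y) := by
    rcases le_total x y with hxy | hxy <;> simp [hxy, h]
  rw [eq_empty_iff_forall_notMem]
  rintro m ⟨⟨hxm, hmy⟩, hm⟩
  have hlt := lt_GM_of_mem_diff hIC hM hm hmy
  exact hlt.not_ge (h_minmax ▸ GM_le_of_mem_of_le hm.1 hxm)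

theorem stmt14 (f : unitInterval → ℝ≥0∞) (hf : Monotone f) (hF : ClassF f)
    (K : Type) (b d : K → ℝ≥0∞) (C : Set ℝ≥0∞)
    (hSC : AssociatedPair (Set.range f) K b d C) :
    ∀ x y : ℝ≥0∞, GM (Set.range f) x = GM (Set.range f) y →
      Set.Ico (min x y) (max x y) ∩ (Set.range f \ C) = ∅ :=
  stmt14_general f K b d C hSC
end

section
/- Let F : [0,∞]² → [0,∞] be associative, let f : [0,1] → [0,∞] be in the class 𝓕 with range M, and let ⊗ on M be defined by x ⊗ y = G_M(F(x,y)) = f(f⁻(F(x,y))). Then the function T(x,y) = f⁻(F(f(x),f(y))) on [0,1]² is associative if and only if ⊗ is associative on M. -/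
open Set ENNReal

section aux

variable {f : unitInterval → ℝ≥0∞}

private lemma pinv_bdd {a : ℝ≥0∞} :
    BddAbove {x : ℝ | ∃ hx : x ∈ unitInterval, f ⟨x, hx⟩ < a} :=
  ⟨1, fun _ hz => hz.choose.2⟩

private lemma lt_pinv (hf : Monotone f) {a : ℝ≥0∞} {t : unitInterval}
    (h : (t : ℝ) < (pinv f a : ℝ)) : f t < a := by
  set S := {x : ℝ | ∃ hx : x ∈ unitInterval, f ⟨x, hx⟩ < a} with hS
  have hcoe : ((pinv f a : unitInterval) : ℝ) = sSup S := rfl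
  rw [hcoe] at h
  rcases S.eq_empty_or_nonempty with hE | hNE
  · rw [hE, Real.sSup_empty] at h
    exact absurd h (not_lt.2 t.2.1)
  · obtain ⟨x, hxS, htx⟩ := exists_lt_of_lt_csSup hNE h
    obtain ⟨hx, hxa⟩ := hxS
    exact lt_of_le_of_lt (hf (Subtype.coe_le_coe.mp htx.le : t ≤ ⟨x, hx⟩)) hxa

private lemma pinv_lt {a : ℝ≥0∞} {t : unitInterval}
    (h : ((pinv f a : unitInterval) : ℝ) < (t : ℝ)) : a ≤ f t := by
  by_contra hlt
  push_neg at hlt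
  have h2 : (t : ℝ) ≤ ((pinv f a : unitInterval) : ℝ) :=
    le_csSup pinv_bdd ⟨t.2, hlt⟩
  exact absurd h (not_lt.2 h2)

private lemma rlim_ge {x : unitInterval} {b : ℝ≥0∞}
    (h : ∀ t : unitInterval, x < t → b ≤ f t) : b ≤ rlim f x := by
  unfold rlim
  split
  · exact le_top
  · refine le_sInf ?_
    rintro z ⟨t, ht, rfl⟩
    exact h t ht

private lemma rlim_le {x t : unitInterval} (hx : (x : ℝ) ≠ 1) (h : x < t) :
    rlim f x ≤ f t := by
  unfold rlim
  rw [if_neg hx]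
  exact sInf_le ⟨t, h, rfl⟩

private lemma pinv_ne (hf : Monotone f) (hF : ClassF f) {a b : ℝ≥0∞}
    (hlt : pinv f a < pinv f b) : f (pinv f a) ≠ f (pinv f b) := by
  intro h
  have hcb : f (pinv f a) < b := lt_pinv hf (Subtype.coe_lt_coe.mpr hlt)
  have hbr : b ≤ rlim f (pinv f b) :=
    rlim_ge fun u hu => pinv_lt (Subtype.coe_lt_coe.mpr hu)
  by_cases hr : rlim f (pinv f b) ∈ Set.range f
  · exact absurd ((hF (pinv f b)).1 hr)
      (ne_of_lt (lt_of_lt_of_le (h ▸ hcb) hbr))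
  · exact (hF (pinv f b)).2 hr (pinv f a) (ne_of_lt hlt) h

private lemma pinv_congr (hf : Monotone f) (hF : ClassF f) {a b : ℝ≥0∞}
    (h : f (pinv f a) = f (pinv f b)) : pinv f a = pinv f b := by
  rcases lt_trichotomy (pinv f a) (pinv f b) with h1 | h1 | h1
  · exact absurd h (pinv_ne hf hF h1)
  · exact h1
  · exact absurd h.symm (pinv_ne hf hF h1)

private lemma GM_pinv (hf : Monotone f) (hF : ClassF f) (a : ℝ≥0∞) :
    GM (Set.range f) a = f (pinv f a) := by
  set s := pinv f a with hs
  have hcM : f s ∈ Set.range f := ⟨s, rfl⟩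
  by_cases hca : a ≤ f s
  · have hs2 : sInf (Set.range f ∩ Set.Ici a) = f s := by
      refine le_antisymm (sInf_le ⟨hcM, hca⟩) (le_sInf ?_)
      rintro m ⟨⟨t, rfl⟩, (hm : a ≤ f t)⟩
      rcases lt_or_ge (t : ℝ) (s : ℝ) with h | h
      · exact absurd (lt_pinv hf h) (not_lt.2 hm)
      · exact hf (Subtype.coe_le_coe.mp h)
    unfold GM
    refine le_antisymm (sSup_le ?_) (le_sSup ⟨hcM, Or.inr hs2.symm⟩)
    rintro m ⟨hmM, hm⟩
    rcases hm with hm | hm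
    · calc m = sSup (Set.range f ∩ Set.Iic a) := hm
        _ ≤ a := sSup_le fun z hz => hz.2
        _ ≤ f s := hca
    · rw [Set.mem_singleton_iff] at hm
      rw [hm, hs2]
  · push_neg at hca
    have hra : a ≤ rlim f s :=
      rlim_ge fun t ht => pinv_lt (Subtype.coe_lt_coe.mpr ht)
    have hrM : rlim f s ∉ Set.range f := by
      intro hr
      have h1 := (hF s).1 hr
      exact absurd (h1 ▸ hca) (not_lt.2 hra)
    have hs1 : sSup (Set.range f ∩ Set.Iic a) = f s := by
      refine le_antisymm (sSup_le ?_) (le_sSup ⟨hcM, le_of_lt hca⟩)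
      rintro m ⟨⟨t, rfl⟩, (hm : f t ≤ a)⟩
      rcases le_or_gt (t : ℝ) (s : ℝ) with h | h
      · exact hf (Subtype.coe_le_coe.mp h)
      · exfalso
        have hs1' : (s : ℝ) ≠ 1 := fun h1 => absurd (h1 ▸ h) (not_lt.2 t.2.2)
        have h1 : rlim f s ≤ f t := rlim_le hs1' (Subtype.coe_lt_coe.mp h)
        exact hrM ⟨t, (le_antisymm h1 (hm.trans hra)).symm⟩
    have hs2 : sInf (Set.range f ∩ Set.Ici a) = rlim f s := by
      refine le_antisymm ?_ (le_sInf ?_)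
      · by_cases h1 : (s : ℝ) = 1
        · have : rlim f s = ⊤ := by unfold rlim; rw [if_pos h1]
          rw [this]; exact le_top
        · have hr : rlim f s = sInf {z | ∃ t : unitInterval, s < t ∧ f t = z} := by
            unfold rlim; rw [if_neg h1]
          rw [hr]
          refine sInf_le_sInf ?_
          rintro z ⟨t, ht, rfl⟩
          exact ⟨⟨t, rfl⟩, pinv_lt (Subtype.coe_lt_coe.mpr ht)⟩
      · rintro m ⟨⟨t, rfl⟩, (hm : a ≤ f t)⟩
        have hst : s < t := by
          rcases lt_or_ge (s : ℝ) (t : ℝ) with h | h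
          · exact Subtype.coe_lt_coe.mp h
          · exact absurd (le_trans hm (hf (Subtype.coe_le_coe.mp h))) (not_le.2 hca)
        have h1 : (s : ℝ) ≠ 1 := fun h1 =>
          absurd (h1 ▸ Subtype.coe_lt_coe.mpr hst) (not_lt.2 t.2.2)
        exact rlim_le h1 hst
    unfold GM
    have hset : Set.range f ∩
        ({sSup (Set.range f ∩ Set.Iic a), sInf (Set.range f ∩ Set.Ici a)} : Set ℝ≥0∞)
        = {f s} := by
      ext m
      constructor
      · rintro ⟨hmM, hm⟩
        rcases hm with hm | hm
        · rw [hm, hs1]; rfl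
        · rw [Set.mem_singleton_iff] at hm
          rw [hm, hs2] at hmM
          exact absurd hmM hrM
      · rintro hm
        rw [Set.mem_singleton_iff] at hm
        subst hm
        exact ⟨hcM, Or.inl hs1.symm⟩
    rw [hset, sSup_singleton]

end aux

theorem stmt19 (F : ℝ≥0∞ → ℝ≥0∞ → ℝ≥0∞)
    (hFassoc : ∀ x y z : ℝ≥0∞, F (F x y) z = F x (F y z))
    (f : unitInterval → ℝ≥0∞) (hf : Monotone f) (hF : ClassF f) :
    (∀ x y z : unitInterval,
        pinv f (F (f (pinv f (F (f x) (f y)))) (f z)) =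
        pinv f (F (f x) (f (pinv f (F (f y) (f z)))))) ↔
    (∀ x ∈ Set.range f, ∀ y ∈ Set.range f, ∀ z ∈ Set.range f,
        GM (Set.range f) (F (GM (Set.range f) (F x y)) z) =
        GM (Set.range f) (F x (GM (Set.range f) (F y z)))) := by
  have key : ∀ a, GM (Set.range f) a = f (pinv f a) := GM_pinv hf hF
  constructor
  · intro h
    rintro x ⟨x', rfl⟩ y ⟨y', rfl⟩ z ⟨z', rfl⟩
    simp only [key]
    exact congrArg f (h x' y' z')
  · intro h x y z
    apply pinv_congr hf hF
    simp only [← key]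
    exact h (f x) ⟨x, rfl⟩ (f y) ⟨y, rfl⟩ (f z) ⟨z, rfl⟩
end
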